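/- arXiv:2206.06758 — 2 statements merged into one kernel-verified Lean document; each statement's English description precedes it below -/
import Mathlib

section
/- If A ≅_ε B for finite multisets of reals, then |A| = |B|, and the multisets obtained by sorting A and B in nondecreasing order satisfy |a_(k) − b_(k)| ≤ 2ε for every index k (in fact the minimum over matchings of the maximum displacement is achieved by the sorted matching, giving |a_(k) − b_(k)| ≤ ε). -/
/-- `A ≅_ε B` for finite multisets of reals: there is a bijection (matching) `τ`
between the multisets with `|a - τ(a)| ≤ ε` for all `a ∈ A`. -/
def ApproxEq (ε : ℝ) (A B : Multiset ℝ) : Prop :=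
  Multiset.Rel (fun a b => |a - b| ≤ ε) A B

private lemma rel_erase_min (ε : ℝ) {A B : Multiset ℝ} {a b : ℝ}
    (h : Multiset.Rel (fun a b => |a - b| ≤ ε) A B)
    (ha : a ∈ A) (hb : b ∈ B)
    (hamin : ∀ x ∈ A, a ≤ x) (hbmin : ∀ y ∈ B, b ≤ y) :
    Multiset.Rel (fun a b => |a - b| ≤ ε) (A.erase a) (B.erase b) := by
  rw [← Multiset.cons_erase ha, Multiset.rel_cons_left] at h
  obtain ⟨b₁, B₁, hab₁, hrel, hBeq⟩ := h
  by_cases hbb : b₁ = b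
  · subst hbb
    rwa [hBeq, Multiset.erase_cons_head]
  · have hbB₁ : b ∈ B₁ := by
      rcases Multiset.mem_cons.1 (hBeq ▸ hb) with h' | h'
      · exact absurd h'.symm hbb
      · exact h'
    rw [← Multiset.cons_erase hbB₁, Multiset.rel_cons_right] at hrel
    obtain ⟨a₁, A₁, ha₁b, hrel', hAeq⟩ := hrel
    have hBe : B.erase b = b₁ ::ₘ B₁.erase b := by
      rw [hBeq]; exact Multiset.erase_cons_tail B₁ hbb
    rw [hBe, hAeq]
    refine Multiset.Rel.cons ?_ hrel'
    have haa₁ : a ≤ a₁ := by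
      apply hamin
      rw [← Multiset.cons_erase ha, hAeq]
      exact Multiset.mem_cons_of_mem (Multiset.mem_cons_self _ _)
    have hbb₁ : b ≤ b₁ := by
      apply hbmin
      rw [hBeq]; exact Multiset.mem_cons_self _ _
    rw [abs_sub_le_iff] at hab₁ ha₁b ⊢
    constructor <;> linarith [hab₁.1, hab₁.2, ha₁b.1, ha₁b.2]

private lemma sorted_forall₂ (ε : ℝ) :
    ∀ (n : ℕ) (A B : Multiset ℝ), Multiset.card A = n →
      Multiset.Rel (fun a b => |a - b| ≤ ε) A B →
      List.Forall₂ (fun a b => |a - b| ≤ ε) (A.sort (· ≤ ·)) (B.sort (· ≤ ·)) := by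
  intro n
  induction n with
  | zero =>
    intro A B hcard h
    have hA : A = 0 := Multiset.card_eq_zero.1 hcard
    subst hA
    have hB : B = 0 := Multiset.rel_zero_left.1 h
    subst hB
    simp
  | succ n ih =>
    intro A B hcard h
    have hcardB : Multiset.card B = n + 1 := by
      rw [← Multiset.card_eq_card_of_rel h, hcard]
    have hlenA : (A.sort (· ≤ ·)).length = n + 1 := by
      rw [Multiset.length_sort, hcard]
    have hlenB : (B.sort (· ≤ ·)).length = n + 1 := by
      rw [Multiset.length_sort, hcardB]
    rcases hsA : A.sort (· ≤ ·) with _ | ⟨a, lA⟩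
    · rw [hsA] at hlenA; simp at hlenA
    rcases hsB : B.sort (· ≤ ·) with _ | ⟨b, lB⟩
    · rw [hsB] at hlenB; simp at hlenB
    have hAeq : A = a ::ₘ (lA : Multiset ℝ) := by
      rw [← Multiset.sort_eq A (· ≤ ·), hsA]; rfl
    have hBeq : B = b ::ₘ (lB : Multiset ℝ) := by
      rw [← Multiset.sort_eq B (· ≤ ·), hsB]; rfl
    have hsortA : List.Pairwise (· ≤ ·) (a :: lA) := hsA ▸ Multiset.pairwise_sort A _
    have hsortB : List.Pairwise (· ≤ ·) (b :: lB) := hsB ▸ Multiset.pairwise_sort B _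
    have hamin : ∀ x ∈ A, a ≤ x := by
      intro x hx
      rw [← Multiset.mem_sort (· ≤ ·), hsA] at hx
      rcases List.mem_cons.1 hx with rfl | hx
      · exact le_refl x
      · exact List.rel_of_pairwise_cons hsortA hx
    have hbmin : ∀ y ∈ B, b ≤ y := by
      intro y hy
      rw [← Multiset.mem_sort (· ≤ ·), hsB] at hy
      rcases List.mem_cons.1 hy with rfl | hy
      · exact le_refl y
      · exact List.rel_of_pairwise_cons hsortB hy
    have haA : a ∈ A := by rw [hAeq]; exact Multiset.mem_cons_self _ _
    have hbB : b ∈ B := by rw [hBeq]; exact Multiset.mem_cons_self _ _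
    -- |a - b| ≤ ε
    obtain ⟨b', hb'B, hab'⟩ := Multiset.exists_mem_of_rel_of_mem h haA
    obtain ⟨a', ha'A, ha'b⟩ := Multiset.exists_mem_of_rel_of_mem (Multiset.rel_flip.2 h) hbB
    have hab : |a - b| ≤ ε := by
      have h1 : a ≤ a' := hamin a' ha'A
      have h2 : b ≤ b' := hbmin b' hb'B
      have ha'b : |a' - b| ≤ ε := ha'b
      rw [abs_sub_le_iff] at hab' ha'b ⊢
      constructor <;> linarith [hab'.1, hab'.2, ha'b.1, ha'b.2]
    -- tails
    have herel := rel_erase_min ε h haA hbB hamin hbmin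
    have heA : A.erase a = (lA : Multiset ℝ) := by
      rw [hAeq, Multiset.erase_cons_head]
    have heB : B.erase b = (lB : Multiset ℝ) := by
      rw [hBeq, Multiset.erase_cons_head]
    rw [heA, heB] at herel
    have hcardlA : Multiset.card (lA : Multiset ℝ) = n := by
      have := hcard
      rw [hAeq] at this
      simpa using this
    have htail := ih (lA : Multiset ℝ) (lB : Multiset ℝ) hcardlA herel
    have hsortlA : Multiset.sort (lA : Multiset ℝ) (· ≤ ·) = lA :=
      List.Perm.eq_of_pairwise' (Multiset.pairwise_sort _ _) hsortA.of_cons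
        (Multiset.coe_eq_coe.1 (Multiset.sort_eq (lA : Multiset ℝ) (· ≤ ·)))
    have hsortlB : Multiset.sort (lB : Multiset ℝ) (· ≤ ·) = lB :=
      List.Perm.eq_of_pairwise' (Multiset.pairwise_sort _ _) hsortB.of_cons
        (Multiset.coe_eq_coe.1 (Multiset.sort_eq (lB : Multiset ℝ) (· ≤ ·)))
    rw [hsortlA, hsortlB] at htail
    exact List.Forall₂.cons hab htail

/-- If `A ≅_ε B` then `|A| = |B|`, and the `k`-th smallest elements of
`A` and `B` satisfy `|a_(k) − b_(k)| ≤ 2ε` for every `k`; in fact the sorted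
matching achieves the optimum, giving `|a_(k) − b_(k)| ≤ ε`. -/
theorem approxEq_card_and_sorted (ε : ℝ) (A B : Multiset ℝ) (h : ApproxEq ε A B) :
    Multiset.card A = Multiset.card B ∧
    (∀ (k : ℕ) (hA : k < (A.sort (· ≤ ·)).length) (hB : k < (B.sort (· ≤ ·)).length),
      |(A.sort (· ≤ ·)).get ⟨k, hA⟩ - (B.sort (· ≤ ·)).get ⟨k, hB⟩| ≤ 2 * ε) ∧
    (∀ (k : ℕ) (hA : k < (A.sort (· ≤ ·)).length) (hB : k < (B.sort (· ≤ ·)).length),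
      |(A.sort (· ≤ ·)).get ⟨k, hA⟩ - (B.sort (· ≤ ·)).get ⟨k, hB⟩| ≤ ε) := by
  have hf := sorted_forall₂ ε (Multiset.card A) A B rfl h
  have heps : ∀ (k : ℕ) (hA : k < (A.sort (· ≤ ·)).length) (hB : k < (B.sort (· ≤ ·)).length),
      |(A.sort (· ≤ ·)).get ⟨k, hA⟩ - (B.sort (· ≤ ·)).get ⟨k, hB⟩| ≤ ε :=
    fun k hA hB => hf.get hA hB
  refine ⟨Multiset.card_eq_card_of_rel h, ?_, heps⟩
  intro k hA hB
  have h1 := heps k hA hB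
  have h2 := abs_nonneg ((A.sort (· ≤ ·)).get ⟨k, hA⟩ - (B.sort (· ≤ ·)).get ⟨k, hB⟩)
  linarith
end

section
/- Any function computed by a message-passing GNN assigns equal node outputs to any two nodes that receive the same color in every iteration of 1-WL color refinement (initialized with the node labels); consequently, a GNN cannot produce different outputs on two nodes whose 1-WL colorings agree at every round. -/
open scoped Classical

/-- The type of 1-WL colors after `t` rounds, starting from initial colors in `L`. -/
def WLC (L : Type*) : ℕ → Type _
  | 0 => L
  | (t + 1) => WLC L t × Multiset (WLC L t)

/-- 1-WL color refinement initialized with the node labels `X`: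
`c⁰(i) = X i` and `c^{m+1}(i) = (c^m(i), {{c^m(j) : j ∈ N(i)}})`. -/
noncomputable def wlc {V L : Type*} [Fintype V] (G : SimpleGraph V) (X : V → L) :
    (t : ℕ) → V → WLC L t
  | 0 => X
  | (t + 1) => fun i => (wlc G X t i, (G.neighborFinset i).val.map (wlc G X t))

/-- The node values computed by a message-passing GNN with layer-`m` update `fupd m`
and aggregation `fagg m`: `v⁰ = X` and
`v^{m+1}_i = fupd m (v^m_i, fagg m {{v^m_j : j ∈ N(i)}})`. -/
noncomputable def gnnVal {V D A : Type*} [Fintype V] (G : SimpleGraph V)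
    (fupd : ℕ → D → A → D) (fagg : ℕ → Multiset D → A) (X : V → D) :
    ℕ → V → D
  | 0 => X
  | (m + 1) => fun i => fupd m (gnnVal G fupd fagg X m i)
      (fagg m ((G.neighborFinset i).val.map (gnnVal G fupd fagg X m)))

/-- Replays the GNN on a WL color: a color of round `m + 1` records the node's previous color
and the multiset of its neighbours' previous colors, which is exactly the input of layer `m`. -/
noncomputable def wlDecode {D A : Type*} (fupd : ℕ → D → A → D)
    (fagg : ℕ → Multiset D → A) : (m : ℕ) → WLC D m → D
  | 0 => id
  | (m + 1) => fun c =>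
      fupd m (wlDecode fupd fagg m c.1) (fagg m (c.2.map (wlDecode fupd fagg m)))

theorem gnnVal_eq_wlDecode_wlc {V D A : Type*} [Fintype V] (G : SimpleGraph V)
    (fupd : ℕ → D → A → D) (fagg : ℕ → Multiset D → A) (X : V → D) (m : ℕ) (i : V) :
    gnnVal G fupd fagg X m i = wlDecode fupd fagg m (wlc G X m i) := by
  induction m generalizing i with
  | zero => rfl
  | succ m ih => simp only [gnnVal, wlc, wlDecode, Multiset.map_map, Function.comp_def, ih]

/-- A message-passing GNN assigns equal values to any two nodes that
receive the same 1-WL color (refinement initialized with the node labels) at the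
corresponding round; hence a GNN cannot separate nodes that 1-WL does not separate. -/
theorem gnn_bounded_by_wl {V D A : Type*} [Fintype V] (G : SimpleGraph V)
    (fupd : ℕ → D → A → D) (fagg : ℕ → Multiset D → A) (X : V → D) :
    ∀ (m : ℕ) (i j : V), wlc G X m i = wlc G X m j →
      gnnVal G fupd fagg X m i = gnnVal G fupd fagg X m j := by
  intro m i j h
  rw [gnnVal_eq_wlDecode_wlc, gnnVal_eq_wlDecode_wlc, h]
end
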